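/- For all r ≥ 1, the elementary supersymmetric polynomial e_r(x_1,…,x_M/y_1,…,y_N) := Σ_{a+b=r} (−1)^b e_a(x_1,…,x_M) h_b(y_1,…,y_N) lies in I(𝔠), i.e. it is invariant under 𝔖_M × 𝔖_N (permuting the x's and y's separately) and satisfies ∂f/∂x_i + ∂f/∂y_j ≡ 0 (mod x_i − y_j) for all 1 ≤ i ≤ M and 1 ≤ j ≤ N. -/

import Mathlib

open MvPolynomial

section Helpers

variable {σ : Type*} [Fintype σ] [DecidableEq σ] {R : Type*} [CommRing R]

private lemma pderiv_prod_X_of_not_mem {i : σ} {t : Finset σ} (h : i ∉ t) :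
    pderiv i (∏ s ∈ t, (X s : MvPolynomial σ R)) = 0 := by
  classical
  induction t using Finset.induction_on with
  | empty => simp
  | insert a u hs ih =>
      rw [Finset.prod_insert hs, pderiv_mul, ih (fun hm => h (Finset.mem_insert_of_mem hm)),
        pderiv_X_of_ne (by rintro rfl; exact h (Finset.mem_insert_self _ _))]
      ring

private lemma pderiv_prod_X (i : σ) (t : Finset σ) :
    pderiv i (∏ s ∈ t, (X s : MvPolynomial σ R)) =
      if i ∈ t then ∏ s ∈ t.erase i, (X s : MvPolynomial σ R) else 0 := by
  by_cases h : i ∈ t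
  · rw [if_pos h, ← Finset.mul_prod_erase t _ h, pderiv_mul, pderiv_X_self,
      pderiv_prod_X_of_not_mem (Finset.notMem_erase i t)]
    ring
  · rw [if_neg h, pderiv_prod_X_of_not_mem h]

/-- Recurrence for derivatives of elementary symmetric polynomials. -/
private lemma esymm_pderiv_rec (i : σ) (a : ℕ) :
    X i * pderiv i (esymm σ R a) + pderiv i (esymm σ R (a + 1)) = esymm σ R a := by
  classical
  have h1 : X i * pderiv i (esymm σ R a) =
      ∑ t ∈ (Finset.powersetCard a Finset.univ).filter (fun t => i ∈ t),
        ∏ s ∈ t, (X s : MvPolynomial σ R) := by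
    rw [esymm, map_sum, Finset.mul_sum]
    simp_rw [pderiv_prod_X, mul_ite, mul_zero]
    rw [Finset.sum_ite, Finset.sum_const_zero, add_zero]
    exact Finset.sum_congr rfl fun t ht => by
      rw [Finset.mul_prod_erase t _ (Finset.mem_filter.mp ht).2]
  have h2 : pderiv i (esymm σ R (a + 1)) =
      ∑ t ∈ (Finset.powersetCard a Finset.univ).filter (fun t => i ∉ t),
        ∏ s ∈ t, (X s : MvPolynomial σ R) := by
    rw [esymm, map_sum]
    simp_rw [pderiv_prod_X]
    rw [Finset.sum_ite, Finset.sum_const_zero, add_zero]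
    refine Finset.sum_bij' (fun t _ => t.erase i) (fun u _ => insert i u) ?_ ?_ ?_ ?_ ?_
    · intro t ht
      obtain ⟨htp, hti⟩ := Finset.mem_filter.mp ht
      rw [Finset.mem_powersetCard_univ] at htp
      refine Finset.mem_filter.mpr ⟨Finset.mem_powersetCard_univ.mpr ?_,
        Finset.notMem_erase i t⟩
      rw [Finset.card_erase_of_mem hti, htp]
      omega
    · intro u hu
      obtain ⟨hup, hui⟩ := Finset.mem_filter.mp hu
      rw [Finset.mem_powersetCard_univ] at hup
      refine Finset.mem_filter.mpr ⟨Finset.mem_powersetCard_univ.mpr ?_,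
        Finset.mem_insert_self i u⟩
      rw [Finset.card_insert_of_notMem hui, hup]
    · intro t ht
      exact Finset.insert_erase (Finset.mem_filter.mp ht).2
    · intro u hu
      exact Finset.erase_insert (Finset.mem_filter.mp hu).2
    · intro t ht
      rfl
  rw [h1, h2, esymm, Finset.sum_filter_add_sum_filter_not]

private lemma multiset_prod_X (m : Multiset σ) :
    ((m.map X).prod : MvPolynomial σ R) = monomial m.toFinsupp 1 := by
  induction m using Multiset.induction_on with
  | empty => simp [monomial_zero']
  | cons a m ih =>
      rw [Multiset.map_cons, Multiset.prod_cons, ih]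
      have h : ((a ::ₘ m : Multiset σ).toFinsupp) = Finsupp.single a 1 + m.toFinsupp := by
        rw [← Multiset.toFinsupp_singleton, ← Multiset.toFinsupp_add, Multiset.singleton_add]
      rw [h, monomial_single_add, pow_one]

/-- Recurrence for derivatives of complete homogeneous symmetric polynomials. -/
private lemma hsymm_pderiv_rec (j : σ) (b : ℕ) :
    pderiv j (hsymm σ R (b + 1)) = hsymm σ R b + X j * pderiv j (hsymm σ R b) := by
  classical
  have key : ∀ (n : ℕ), pderiv j (hsymm σ R n) =
      ∑ s : Sym σ n, monomial (s.1.toFinsupp - Finsupp.single j 1) ((s.1.count j : R)) := by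
    intro n
    rw [hsymm, map_sum]
    refine Finset.sum_congr rfl fun s _ => ?_
    rw [multiset_prod_X, pderiv_monomial, one_mul]
    congr 1 <;> simp [Multiset.toFinsupp_apply]
  have rhs : hsymm σ R b + X j * pderiv j (hsymm σ R b) =
      ∑ s : Sym σ b, monomial s.1.toFinsupp ((s.1.count j : R) + 1) := by
    rw [key, hsymm, Finset.mul_sum, ← Finset.sum_add_distrib]
    refine Finset.sum_congr rfl fun s _ => ?_
    rw [multiset_prod_X]
    by_cases h : j ∈ s.1
    · have hle : Finsupp.single j 1 ≤ s.1.toFinsupp := by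
        rw [Finsupp.single_le_iff, Multiset.toFinsupp_apply]
        exact Multiset.one_le_count_iff_mem.mpr h
      have hsub : Finsupp.single j 1 + (s.1.toFinsupp - Finsupp.single j 1) = s.1.toFinsupp :=
        add_tsub_cancel_of_le hle
      have hXmul : (X j : MvPolynomial σ R) * monomial (s.1.toFinsupp - Finsupp.single j 1)
            ((s.1.count j : R)) =
          monomial s.1.toFinsupp ((s.1.count j : R)) := by
        conv_rhs => rw [← hsub]
        rw [monomial_single_add, pow_one]
      rw [hXmul, ← map_add, add_comm]
    · have hc : (s.1.count j : R) = 0 := by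
        rw [Multiset.count_eq_zero_of_notMem h, Nat.cast_zero]
      rw [hc]
      simp
  rw [key, rhs]
  rw [← Finset.sum_filter_add_sum_filter_not Finset.univ (fun s : Sym σ (b+1) => j ∈ s)]
  have hzero : ∑ s ∈ Finset.univ.filter (fun s : Sym σ (b+1) => j ∉ s),
      monomial (s.1.toFinsupp - Finsupp.single j 1) ((s.1.count j : R)) = 0 := by
    refine Finset.sum_eq_zero fun s hs => ?_
    have := (Finset.mem_filter.mp hs).2
    have : s.1.count j = 0 := by
      rw [Multiset.count_eq_zero]
      exact fun h => this (by exact h)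
    rw [this, Nat.cast_zero, map_zero]
  rw [hzero, add_zero]
  refine Finset.sum_bij' (fun s hs => s.erase j (Finset.mem_filter.mp hs).2)
    (fun n _ => j ::ₛ n) ?_ ?_ ?_ ?_ ?_
  · intro s hs; exact Finset.mem_univ _
  · intro n hn
    refine Finset.mem_filter.mpr ⟨Finset.mem_univ _, Sym.mem_cons_self j n⟩
  · intro s hs
    exact Sym.cons_erase _
  · intro n hn
    exact Sym.erase_cons_head n j _
  · intro s hs
    have hmem := (Finset.mem_filter.mp hs).2
    have hcoe : ((s.erase j hmem : Sym σ b) : Multiset σ) = s.1.erase j := rfl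
    have hcons : (j ::ₘ s.1.erase j) = s.1 := Multiset.cons_erase hmem
    have h1 : s.1.toFinsupp = Finsupp.single j 1 + (s.1.erase j).toFinsupp := by
      rw [← Multiset.toFinsupp_singleton, ← Multiset.toFinsupp_add, Multiset.singleton_add,
        hcons]
    have h2 : s.1.count j = (s.1.erase j).count j + 1 := by
      conv_lhs => rw [← hcons]
      rw [Multiset.count_cons_self]
    show monomial (s.1.toFinsupp - Finsupp.single j 1) ((s.1.count j : R)) =
      monomial (((s.erase j hmem : Sym σ b) : Multiset σ).toFinsupp)
        ((((s.erase j hmem : Sym σ b) : Multiset σ).count j : R) + 1)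
    rw [hcoe, h1, h2, add_tsub_cancel_left]
    push_cast
    rfl

end Helpers

/-- Abstract telescoping identity in a commutative ring. -/
private lemma telescope {A : Type*} [CommRing A] (x y : A) (P Q E H : ℕ → A)
    (hP0 : P 0 = 0) (hQ0 : Q 0 = 0)
    (hE : ∀ a, x * P a + P (a + 1) = E a)
    (hH : ∀ b, Q (b + 1) = H b + y * Q b) (r : ℕ) :
    ∑ ab ∈ Finset.HasAntidiagonal.antidiagonal r, (-1 : A) ^ ab.2 * (P ab.1 * H ab.2 + E ab.1 * Q ab.2) =
      (x - y) * ∑ ab ∈ Finset.HasAntidiagonal.antidiagonal r, (-1 : A) ^ ab.2 * (P ab.1 * Q ab.2) := by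
  set u : ℕ → A := fun k => (-1 : A) ^ (r + 1 - k) * P k * Q (r + 1 - k) with hu
  rw [eq_comm, ← sub_eq_zero, Finset.Nat.sum_antidiagonal_eq_sum_range_succ_mk,
    Finset.Nat.sum_antidiagonal_eq_sum_range_succ_mk, Finset.mul_sum, ← Finset.sum_sub_distrib]
  have key : ∀ k ∈ Finset.range (r + 1),
      (x - y) * ((-1 : A) ^ (r - k) * (P k * Q (r - k))) -
        (-1 : A) ^ (r - k) * (P k * H (r - k) + E k * Q (r - k)) = u k - u (k + 1) := by
    intro k hk
    have hk' : k ≤ r := Nat.lt_succ_iff.mp (Finset.mem_range.mp hk)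
    have h1 : r + 1 - k = (r - k) + 1 := by omega
    have h2 : r + 1 - (k + 1) = r - k := by omega
    rw [hu]
    simp only [h1, h2]
    rw [← hE k, hH (r - k), pow_succ]
    ring
  rw [Finset.sum_congr rfl key, Finset.sum_range_sub' u]
  have h1 : u (r + 1) = 0 := by simp [hu, hQ0]
  have h2 : u 0 = 0 := by simp [hu, hP0]
  rw [h1, h2, sub_zero]

private lemma pderiv_rename_ne {σ υ : Type*} [DecidableEq υ] (f : σ → υ) (j : υ)
    (hj : ∀ s, f s ≠ j) {R : Type*} [CommRing R] (p : MvPolynomial σ R) :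
    pderiv j (rename f p) = 0 := by
  refine pderiv_eq_zero_of_notMem_vars fun h => ?_
  obtain ⟨s, _, hs⟩ := mem_vars_rename f p h
  exact hj s hs

/-- The elementary supersymmetric polynomial
`e_r(x/y) = Σ_{a+b=r} (−1)^b e_a(x) h_b(y)` in `ℂ[x_1,…,x_M, y_1,…,y_N]`,
with the `x`-variables indexed by `Sum.inl` and the `y`-variables by `Sum.inr`. -/
noncomputable def superEsymm (M N : ℕ) (r : ℕ) : MvPolynomial (Fin M ⊕ Fin N) ℂ :=
  ∑ ab ∈ Finset.HasAntidiagonal.antidiagonal r,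
    (-1 : ℂ) ^ ab.2 •
      (rename Sum.inl (esymm (Fin M) ℂ ab.1) * rename Sum.inr (hsymm (Fin N) ℂ ab.2))

/-- for `r ≥ 1`, the elementary supersymmetric polynomial lies in `I(𝔠)`:
it is invariant under `𝔖_M × 𝔖_N`, and `x_i − y_j` divides `∂f/∂x_i + ∂f/∂y_j`. -/
theorem superEsymm_mem_I (M N : ℕ) (r : ℕ) (hr : 1 ≤ r) :
    (∀ (τ : Equiv.Perm (Fin M)) (ρ : Equiv.Perm (Fin N)),
      rename (Sum.map ⇑τ ⇑ρ) (superEsymm M N r) = superEsymm M N r) ∧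
    (∀ (i : Fin M) (j : Fin N),
      (X (Sum.inl i) - X (Sum.inr j) : MvPolynomial (Fin M ⊕ Fin N) ℂ) ∣
        (pderiv (Sum.inl i) (superEsymm M N r) + pderiv (Sum.inr j) (superEsymm M N r))) := by
  constructor
  · intro τ ρ
    unfold superEsymm
    rw [map_sum]
    refine Finset.sum_congr rfl fun ab _ => ?_
    rw [map_smul, map_mul, rename_rename, rename_rename]
    have h1 : Sum.map ⇑τ ⇑ρ ∘ Sum.inl = Sum.inl ∘ ⇑τ := rfl
    have h2 : Sum.map ⇑τ ⇑ρ ∘ Sum.inr = Sum.inr ∘ ⇑ρ := rfl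
    rw [h1, h2, ← rename_rename, ← rename_rename, rename_esymm, rename_hsymm]
  · intro i j
    set E : ℕ → MvPolynomial (Fin M ⊕ Fin N) ℂ :=
      fun a => rename Sum.inl (esymm (Fin M) ℂ a) with hEdef
    set H : ℕ → MvPolynomial (Fin M ⊕ Fin N) ℂ :=
      fun b => rename Sum.inr (hsymm (Fin N) ℂ b) with hHdef
    set P : ℕ → MvPolynomial (Fin M ⊕ Fin N) ℂ := fun a => pderiv (Sum.inl i) (E a) with hPdef
    set Q : ℕ → MvPolynomial (Fin M ⊕ Fin N) ℂ := fun b => pderiv (Sum.inr j) (H b) with hQdef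
    have hPE : ∀ a, P a = rename Sum.inl (pderiv i (esymm (Fin M) ℂ a)) := fun a =>
      pderiv_rename Sum.inl_injective i _
    have hQH : ∀ b, Q b = rename Sum.inr (pderiv j (hsymm (Fin N) ℂ b)) := fun b =>
      pderiv_rename Sum.inr_injective j _
    have hP0 : P 0 = 0 := by
      rw [hPdef]; simp [hEdef]
    have hQ0 : Q 0 = 0 := by
      rw [hQdef]; simp [hHdef, hsymm_zero]
    have hErec : ∀ a, X (Sum.inl i) * P a + P (a + 1) = E a := by
      intro a
      rw [hPE, hPE, hEdef]
      rw [show (X (Sum.inl i) : MvPolynomial (Fin M ⊕ Fin N) ℂ) = rename Sum.inl (X i) by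
        rw [rename_X]]
      rw [← map_mul, ← map_add, esymm_pderiv_rec]
    have hHrec : ∀ b, Q (b + 1) = H b + X (Sum.inr j) * Q b := by
      intro b
      rw [hQH, hQH, hHdef]
      rw [show (X (Sum.inr j) : MvPolynomial (Fin M ⊕ Fin N) ℂ) = rename Sum.inr (X j) by
        rw [rename_X]]
      rw [← map_mul, ← map_add, hsymm_pderiv_rec]
    have hHP : ∀ b, pderiv (Sum.inl i) (H b) = 0 := fun b =>
      pderiv_rename_ne Sum.inr (Sum.inl i) (fun s => by simp) _
    have hEQ : ∀ a, pderiv (Sum.inr j) (E a) = 0 := fun a =>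
      pderiv_rename_ne Sum.inl (Sum.inr j) (fun s => by simp) _
    have hD : pderiv (Sum.inl i) (superEsymm M N r) + pderiv (Sum.inr j) (superEsymm M N r) =
        ∑ ab ∈ Finset.HasAntidiagonal.antidiagonal r,
          (-1 : MvPolynomial (Fin M ⊕ Fin N) ℂ) ^ ab.2 * (P ab.1 * H ab.2 + E ab.1 * Q ab.2) := by
      unfold superEsymm
      rw [map_sum, map_sum, ← Finset.sum_add_distrib]
      refine Finset.sum_congr rfl fun ab _ => ?_
      rw [smul_eq_C_mul, pderiv_C_mul, pderiv_C_mul, pderiv_mul, pderiv_mul,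
        hHP ab.2, hEQ ab.1, mul_zero, add_zero, zero_mul, zero_add, ← mul_add,
        map_pow, map_neg, map_one]
    rw [hD, telescope (X (Sum.inl i)) (X (Sum.inr j)) P Q E H hP0 hQ0 hErec hHrec r]
    exact Dvd.intro _ rfl
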